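/- arXiv:2203.08050 — 9 statements merged into one kernel-verified Lean document; each statement's English description precedes it below -/
import Mathlib

section
/- Let (Ω, 𝒜, ℙ) be a probability space with random variables Y₀, Y₁ : Ω → ℝ (integrable), D_z, D_{z'} : Ω → {0,1}, and Z : Ω → {z, z'} with ℙ(Z=z) > 0 and ℙ(Z=z') > 0. Assume Z is independent of the quadruple (Y₀, Y₁, D_z, D_{z'}), that D_{z'} ≥ D_z almost surely, and that ℙ(D_{z'} > D_z) > 0. Define D = D_z·1{Z=z} + D_{z'}·1{Z=z'} and Y = Y₁·D + Y₀·(1−D). Then (E[Y | Z=z'] − E[Y | Z=z]) / (E[D | Z=z'] − E[D | Z=z]) = E[Y₁ − Y₀ | D_{z'} > D_z]. -/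
open MeasureTheory ProbabilityTheory

/-!
Write `Y(d) = d Y₁ + (1 - d) Y₀`. On `{Z = z'}` the observed pair `(Y, D)` is
`(Y(D_{z'}), D_{z'})`, a function of `(Y₀, Y₁, D_z, D_{z'})` and hence independent of `Z`;
so conditioning on `Z = z'` only averages it, and likewise for `z`. The Wald ratio thus becomes
`E[Y(D_{z'}) - Y(D_z)] / E[D_{z'} - D_z] = E[(D_{z'} - D_z)(Y₁ - Y₀)] / E[D_{z'} - D_z]`,
and by monotonicity `D_{z'} - D_z` is the indicator of the compliers `{D_z < D_{z'}}`.
-/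

section Independence

variable {Ω β : Type*} [MeasurableSpace Ω] [MeasurableSpace β] {μ : Measure Ω}
  {Z : Ω → β} {W : Ω → ℝ}

lemma ProbabilityTheory.IndepFun.setIntegral_preimage_eq_mul (hZW : IndepFun Z W μ)
    (hZ : Measurable Z) (hW : AEMeasurable W μ) {s : Set β} (hs : MeasurableSet s) :
    ∫ ω in Z ⁻¹' s, W ω ∂μ = μ.real (Z ⁻¹' s) * ∫ ω, W ω ∂μ :=
  ((IndepFun_iff_Indep Z W μ).1 hZW).setIntegral_eq_mul (f := id) hZ.comap_le hW ⟨s, hs, rfl⟩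
    aestronglyMeasurable_id

lemma ProbabilityTheory.IndepFun.setIntegral_div_measure_eq_integral [IsFiniteMeasure μ]
    [MeasurableSingletonClass β] {V : Ω → ℝ} (hZW : IndepFun Z W μ) (hZ : Measurable Z)
    (hW : AEMeasurable W μ) {b : β} (hb : μ {ω | Z ω = b} ≠ 0)
    (hVW : ∀ ω, Z ω = b → V ω = W ω) :
    (∫ ω in {ω | Z ω = b}, V ω ∂μ) / (μ {ω | Z ω = b}).toReal = ∫ ω, W ω ∂μ := by
  have hb' : (μ {ω | Z ω = b}).toReal ≠ 0 := ENNReal.toReal_ne_zero.2 ⟨hb, measure_ne_top μ _⟩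
  have hs : MeasurableSet {ω | Z ω = b} := hZ (measurableSet_singleton b)
  rw [setIntegral_congr_fun hs hVW, div_eq_iff hb', mul_comm]
  exact hZW.setIntegral_preimage_eq_mul hZ hW (measurableSet_singleton b)

end Independence

section Compliers

variable {Ω : Type*} [MeasurableSpace Ω] {μ : Measure Ω} {d d' : Ω → ℝ}

lemma sub_mul_eq_ite_lt_of_binary {a b : ℝ} (ha : a = 0 ∨ a = 1) (hb : b = 0 ∨ b = 1)
    (hab : a ≤ b) (x : ℝ) : (b - a) * x = if a < b then x else 0 := by
  rcases ha with rfl | rfl <;> rcases hb with rfl | rfl <;> norm_num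
  linarith

lemma integral_sub_mul_eq_setIntegral_lt (hd : Measurable d) (hd' : Measurable d')
    (hd01 : ∀ ω, d ω = 0 ∨ d ω = 1) (hd'01 : ∀ ω, d' ω = 0 ∨ d' ω = 1)
    (hle : ∀ᵐ ω ∂μ, d ω ≤ d' ω) (f : Ω → ℝ) :
    ∫ ω, (d' ω - d ω) * f ω ∂μ = ∫ ω in {ω | d ω < d' ω}, f ω ∂μ := by
  rw [← integral_indicator (measurableSet_lt hd hd')]
  refine integral_congr_ae ?_
  filter_upwards [hle] with ω hω
  exact sub_mul_eq_ite_lt_of_binary (hd01 ω) (hd'01 ω) hω (f ω)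

end Compliers

def observedOutcome (y₀ y₁ d : ℝ) : ℝ := y₁ * d + y₀ * (1 - d)

lemma observedOutcome_sub_observedOutcome (y₀ y₁ d d' : ℝ) :
    observedOutcome y₀ y₁ d' - observedOutcome y₀ y₁ d = (d' - d) * (y₁ - y₀) := by
  unfold observedOutcome
  ring

@[fun_prop]
lemma measurable_observedOutcome :
    Measurable fun p : ℝ × ℝ × ℝ => observedOutcome p.1 p.2.1 p.2.2 := by
  unfold observedOutcome
  fun_prop

section UnitInterval

variable {Ω : Type*} [MeasurableSpace Ω] {μ : Measure Ω} {d : Ω → ℝ}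

lemma norm_le_one_of_mem_Icc {x : ℝ} (hx : x ∈ Set.Icc (0 : ℝ) 1) : ‖x‖ ≤ 1 :=
  (Real.norm_of_nonneg hx.1).trans_le hx.2

lemma integrable_of_forall_mem_Icc [IsFiniteMeasure μ] (hd : AEStronglyMeasurable d μ)
    (hd01 : ∀ ω, d ω ∈ Set.Icc (0 : ℝ) 1) : Integrable d μ :=
  .of_bound hd 1 (.of_forall fun ω => norm_le_one_of_mem_Icc (hd01 ω))

lemma integrable_observedOutcome {Y₀ Y₁ : Ω → ℝ} (hY₀ : Integrable Y₀ μ) (hY₁ : Integrable Y₁ μ)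
    (hd : AEStronglyMeasurable d μ) (hd01 : ∀ ω, d ω ∈ Set.Icc (0 : ℝ) 1) :
    Integrable (fun ω => observedOutcome (Y₀ ω) (Y₁ ω) (d ω)) μ :=
  (hY₁.mul_bdd hd (.of_forall fun ω => norm_le_one_of_mem_Icc (hd01 ω))).add
    (hY₀.mul_bdd (aestronglyMeasurable_const.sub hd)
      (.of_forall fun ω => norm_le_one_of_mem_Icc (Set.Icc.mem_iff_one_sub_mem.mp (hd01 ω))))

end UnitInterval

/-- `Z = false` encodes the instrument value `z` and `Z = true` encodes `z'`. -/
theorem pairwise_late_identification_general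
    {Ω : Type*} [MeasurableSpace Ω] (μ : Measure Ω) [IsProbabilityMeasure μ]
    (Y0 Y1 Dz Dz' : Ω → ℝ) (Z : Ω → Bool)
    (hY0int : Integrable Y0 μ) (hY1int : Integrable Y1 μ)
    (hDzm : Measurable Dz) (hDz'm : Measurable Dz') (hZm : Measurable Z)
    (hDz01 : ∀ ω, Dz ω = 0 ∨ Dz ω = 1) (hDz'01 : ∀ ω, Dz' ω = 0 ∨ Dz' ω = 1)
    (hz : 0 < μ {ω | Z ω = false}) (hz' : 0 < μ {ω | Z ω = true})
    (hindep : IndepFun Z (fun ω => (Y0 ω, Y1 ω, Dz ω, Dz' ω)) μ)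
    (hmono : ∀ᵐ ω ∂μ, Dz ω ≤ Dz' ω)
    (D Y : Ω → ℝ)
    (hD : ∀ ω, D ω = if Z ω = true then Dz' ω else Dz ω)
    (hY : ∀ ω, Y ω = Y1 ω * D ω + Y0 ω * (1 - D ω)) :
    ((∫ ω in {ω | Z ω = true}, Y ω ∂μ) / (μ {ω | Z ω = true}).toReal
        - (∫ ω in {ω | Z ω = false}, Y ω ∂μ) / (μ {ω | Z ω = false}).toReal)
      / ((∫ ω in {ω | Z ω = true}, D ω ∂μ) / (μ {ω | Z ω = true}).toReal
        - (∫ ω in {ω | Z ω = false}, D ω ∂μ) / (μ {ω | Z ω = false}).toReal)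
    = (∫ ω in {ω | Dz ω < Dz' ω}, (Y1 ω - Y0 ω) ∂μ)
        / (μ {ω | Dz ω < Dz' ω}).toReal := by
  have hindep_comp {φ : ℝ × ℝ × ℝ × ℝ → ℝ} (hφ : Measurable φ) :
      IndepFun Z (fun ω => φ (Y0 ω, Y1 ω, Dz ω, Dz' ω)) μ :=
    hindep.comp measurable_id hφ
  have hIcc {d : Ω → ℝ} (hd01 : ∀ ω, d ω = 0 ∨ d ω = 1) (ω : Ω) : d ω ∈ Set.Icc (0 : ℝ) 1 := by
    rcases hd01 ω with h | h <;> simp [h]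
  have hDz := integrable_of_forall_mem_Icc hDzm.aestronglyMeasurable (hIcc hDz01) (μ := μ)
  have hDz' := integrable_of_forall_mem_Icc hDz'm.aestronglyMeasurable (hIcc hDz'01) (μ := μ)
  have hYz := integrable_observedOutcome hY0int hY1int hDzm.aestronglyMeasurable (hIcc hDz01)
  have hYz' := integrable_observedOutcome hY0int hY1int hDz'm.aestronglyMeasurable (hIcc hDz'01)
  rw [(hindep_comp (φ := fun p => observedOutcome p.1 p.2.1 p.2.2.2) (by fun_prop))
      |>.setIntegral_div_measure_eq_integral hZm hYz'.aemeasurable hz'.ne'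
        fun ω h => by simp [hY, hD, h, observedOutcome],
    (hindep_comp (φ := fun p => observedOutcome p.1 p.2.1 p.2.2.1) (by fun_prop))
      |>.setIntegral_div_measure_eq_integral hZm hYz.aemeasurable hz.ne'
        fun ω h => by simp [hY, hD, h, observedOutcome],
    (hindep_comp (φ := fun p => p.2.2.2) (by fun_prop))
      |>.setIntegral_div_measure_eq_integral hZm hDz'.aemeasurable hz'.ne'
        fun ω h => by simp [hD, h],
    (hindep_comp (φ := fun p => p.2.2.1) (by fun_prop))
      |>.setIntegral_div_measure_eq_integral hZm hDz.aemeasurable hz.ne'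
        fun ω h => by simp [hD, h],
    ← integral_sub hYz' hYz, ← integral_sub hDz' hDz]
  have hnum := integral_sub_mul_eq_setIntegral_lt hDzm hDz'm hDz01 hDz'01 hmono
    (fun ω => Y1 ω - Y0 ω)
  have hden := integral_sub_mul_eq_setIntegral_lt hDzm hDz'm hDz01 hDz'01 hmono (fun _ => 1)
  simp only [mul_one, setIntegral_const, smul_eq_mul] at hden
  simp only [observedOutcome_sub_observedOutcome]
  rw [hnum, hden, measureReal_def]

/-- Pairwise LATE identification for a binary treatment: the IV (Wald) ratio
equals the local average treatment effect on compliers. Here `Z : Ω → Bool`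
encodes the two instrument values (`false` = z, `true` = z'). -/
theorem pairwise_late_identification
    {Ω : Type*} [MeasurableSpace Ω] (μ : Measure Ω) [IsProbabilityMeasure μ]
    (Y0 Y1 Dz Dz' : Ω → ℝ) (Z : Ω → Bool)
    (hY0int : Integrable Y0 μ) (hY1int : Integrable Y1 μ)
    (hY0m : Measurable Y0) (hY1m : Measurable Y1)
    (hDzm : Measurable Dz) (hDz'm : Measurable Dz') (hZm : Measurable Z)
    (hDz01 : ∀ ω, Dz ω = 0 ∨ Dz ω = 1) (hDz'01 : ∀ ω, Dz' ω = 0 ∨ Dz' ω = 1)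
    (hz : 0 < μ {ω | Z ω = false}) (hz' : 0 < μ {ω | Z ω = true})
    (hindep : IndepFun Z (fun ω => (Y0 ω, Y1 ω, Dz ω, Dz' ω)) μ)
    (hmono : ∀ᵐ ω ∂μ, Dz ω ≤ Dz' ω)
    (hcomp : 0 < μ {ω | Dz ω < Dz' ω})
    (D Y : Ω → ℝ)
    (hD : ∀ ω, D ω = if Z ω = true then Dz' ω else Dz ω)
    (hY : ∀ ω, Y ω = Y1 ω * D ω + Y0 ω * (1 - D ω)) :
    ((∫ ω in {ω | Z ω = true}, Y ω ∂μ) / (μ {ω | Z ω = true}).toReal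
        - (∫ ω in {ω | Z ω = false}, Y ω ∂μ) / (μ {ω | Z ω = false}).toReal)
      / ((∫ ω in {ω | Z ω = true}, D ω ∂μ) / (μ {ω | Z ω = true}).toReal
        - (∫ ω in {ω | Z ω = false}, D ω ∂μ) / (μ {ω | Z ω = false}).toReal)
    = (∫ ω in {ω | Dz ω < Dz' ω}, (Y1 ω - Y0 ω) ∂μ)
        / (μ {ω | Dz ω < Dz' ω}).toReal :=
  pairwise_late_identification_general μ Y0 Y1 Dz Dz' Z hY0int hY1int hDzm hDz'm hZm hDz01 hDz'01 hz
    hz' hindep hmono D Y hD hY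
end

section
/- Let (Ω, 𝒜, ℙ) be a probability space, let d₁ < d₂ < ⋯ < d_J be real numbers, let Y_{d₁}, …, Y_{d_J} : Ω → ℝ be integrable random variables, let D_z, D_{z'} : Ω → {d₁,…,d_J} be random variables with D_{z'} ≥ D_z almost surely, and let Z : Ω → {z, z'} with ℙ(Z=z) > 0, ℙ(Z=z') > 0 be independent of (Y_{d₁},…,Y_{d_J}, D_z, D_{z'}). Define D = D_z·1{Z=z} + D_{z'}·1{Z=z'} and Y = Σ_{j=1}^J Y_{d_j}·1{D = d_j}. Then E[Y | Z=z'] − E[Y | Z=z] = Σ_{j=2}^{J} E[(Y_{d_j} − Y_{d_{j−1}})·1{D_{z'} ≥ d_j > D_z}]. -/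
/-!
On `{Z = z'}` the observed outcome is `Y(D_{z'}) = ∑ⱼ Y_{dⱼ} 1{D_{z'} = dⱼ}`, a measurable
function of a vector independent of `Z`, so `E[Y | Z = z'] = E[Y(D_{z'})]`; likewise
`E[Y | Z = z] = E[Y(D_z)]`. Where `D_z = d_σ ≤ D_{z'} = d_τ`, the difference
`Y(D_{z'}) - Y(D_z) = Y_{d_τ} - Y_{d_σ}` telescopes into `∑_{σ < j ≤ τ} (Y_{dⱼ} - Y_{d_{j-1}})`,
and `σ < j ≤ τ` iff `D_z < dⱼ ≤ D_{z'}`.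
-/

open MeasureTheory ProbabilityTheory Finset

namespace Finset

lemma sum_Ioc_sub_pred {G : Type*} [AddCommGroup G] (y : ℕ → G) {σ τ : ℕ} (h : σ ≤ τ) :
    ∑ j ∈ Ioc σ τ, (y j - y (j - 1)) = y τ - y σ := by
  induction τ, h using Nat.le_induction with
  | base => simp
  | succ τ h ih => rw [sum_Ioc_succ_top h, ih, Nat.add_sub_cancel]; abel

lemma sum_Icc_one_eq_sum_fin {M : Type*} [AddCommMonoid M] (g : ℕ → M) (J : ℕ) :
    ∑ j ∈ Icc 1 J, g j = ∑ i : Fin J, g (i + 1) := by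
  rw [Fin.sum_univ_eq_sum_range (fun i => g (i + 1)), range_eq_Ico, sum_Ico_add' g 0 J 1,
    zero_add, Ico_add_one_right_eq_Icc]

end Finset

lemma sum_Icc_two_ite_eq_sub {α G : Type*} [LinearOrder α] [AddCommGroup G] {d : ℕ → α}
    {J σ τ : ℕ} (hd : StrictMonoOn d (Set.Icc 1 J)) (hσ : σ ∈ Set.Icc 1 J)
    (hτ : τ ∈ Set.Icc 1 J) (hστ : σ ≤ τ) (y : ℕ → G) :
    ∑ j ∈ Icc 2 J, (if d j ≤ d τ ∧ d σ < d j then y j - y (j - 1) else 0) = y τ - y σ := by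
  have hmem : ∀ j ∈ Icc 2 J, (d j ≤ d τ ∧ d σ < d j ↔ j ∈ Ioc σ τ) := by
    intro j hj
    have hj' : j ∈ Set.Icc 1 J := by simp only [mem_Icc, Set.mem_Icc] at hj ⊢; omega
    rw [hd.le_iff_le hj' hτ, hd.lt_iff_lt hσ hj', mem_Ioc, and_comm]
  have hsub : Ioc σ τ ⊆ Icc 2 J := fun j hj => by
    simp only [mem_Ioc, mem_Icc, Set.mem_Icc] at hj hσ hτ ⊢; omega
  rw [← sum_filter, filter_congr hmem, filter_mem_eq_inter, inter_eq_right.mpr hsub,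
    sum_Ioc_sub_pred y hστ]

/-- The potential outcome at treatment level `w`; it is `0` if `w` is none of `d 1, …, d J`. -/
noncomputable def outcomeAt (d : ℕ → ℝ) (J : ℕ) (y : ℕ → ℝ) (w : ℝ) : ℝ :=
  ∑ j ∈ Icc 1 J, y j * if w = d j then 1 else 0

section outcomeAt

variable {d : ℕ → ℝ} {J : ℕ}

lemma outcomeAt_of_injOn (hd : Set.InjOn d (Set.Icc 1 J)) {k : ℕ} (hk : k ∈ Set.Icc 1 J)
    (y : ℕ → ℝ) : outcomeAt d J y (d k) = y k := by
  calc outcomeAt d J y (d k) = ∑ j ∈ Icc 1 J, if k = j then y j else 0 := by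
        refine sum_congr rfl fun j hj => ?_
        simp only [hd.eq_iff hk (by simpa using hj), mul_ite, mul_one, mul_zero]
    _ = y k := by rw [sum_ite_eq, if_pos (by simpa using hk)]

lemma outcomeAt_sub_outcomeAt (hd : StrictMonoOn d (Set.Icc 1 J)) {v w : ℝ}
    (hv : v ∈ d '' Set.Icc 1 J) (hw : w ∈ d '' Set.Icc 1 J) (hvw : v ≤ w) (y : ℕ → ℝ) :
    outcomeAt d J y w - outcomeAt d J y v
      = ∑ j ∈ Icc 2 J, if d j ≤ w ∧ v < d j then y j - y (j - 1) else 0 := by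
  obtain ⟨σ, hσ, rfl⟩ := hv
  obtain ⟨τ, hτ, rfl⟩ := hw
  rw [outcomeAt_of_injOn hd.injOn hσ, outcomeAt_of_injOn hd.injOn hτ,
    sum_Icc_two_ite_eq_sub hd hσ hτ ((hd.le_iff_le hσ hτ).mp hvw)]

lemma measurable_outcomeAt_fin (d : ℕ → ℝ) (J : ℕ) :
    Measurable fun q : (Fin J → ℝ) × ℝ => ∑ i : Fin J, q.1 i * if q.2 = d (i + 1) then 1 else 0 :=
  Finset.measurable_sum _ fun i _ => ((measurable_pi_apply i).comp measurable_fst).mul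
    (Measurable.ite (measurable_snd (measurableSet_singleton _)) measurable_const measurable_const)

lemma integrable_outcomeAt {Ω : Type*} [MeasurableSpace Ω] {μ : Measure Ω} {Yp : ℕ → Ω → ℝ}
    {W : Ω → ℝ} (hY : ∀ j, Integrable (Yp j) μ) (hW : Measurable W) :
    Integrable (fun ω => outcomeAt d J (Yp · ω) (W ω)) μ := by
  refine integrable_finsetSum _ fun j _ => ?_
  have hterm : (fun ω => Yp j ω * if W ω = d j then 1 else 0)
      = {ω | W ω = d j}.indicator (Yp j) := by
    ext ω; simp [Set.indicator_apply]
  exact hterm ▸ (hY j).indicator (hW (measurableSet_singleton _))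

end outcomeAt

namespace ProbabilityTheory

variable {Ω β : Type*} [MeasurableSpace Ω] [MeasurableSpace β] {μ : Measure Ω}

lemma IndepFun.setIntegral_preimage_eq_mul_s1 {Z : Ω → β} {g : Ω → ℝ} (h : IndepFun Z g μ)
    (hZ : Measurable Z) (hg : AEMeasurable g μ) {s : Set β} (hs : MeasurableSet s) :
    ∫ ω in Z ⁻¹' s, g ω ∂μ = μ.real (Z ⁻¹' s) * ∫ ω, g ω ∂μ :=
  Indep.setIntegral_eq_mul (f := id) hZ.comap_le ((IndepFun_iff_Indep Z g μ).mp h) hg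
    ⟨s, hs, rfl⟩ aestronglyMeasurable_id

lemma IndepFun.setIntegral_preimage_div_eq_integral [IsFiniteMeasure μ] {Z : Ω → β} {g : Ω → ℝ}
    (h : IndepFun Z g μ) (hZ : Measurable Z) (hg : AEMeasurable g μ) {s : Set β}
    (hs : MeasurableSet s) (hμ : μ (Z ⁻¹' s) ≠ 0) :
    (∫ ω in Z ⁻¹' s, g ω ∂μ) / μ.real (Z ⁻¹' s) = ∫ ω, g ω ∂μ := by
  rw [h.setIntegral_preimage_eq_mul_s1 hZ hg hs,
    mul_div_cancel_left₀ _ ((measureReal_ne_zero_iff (measure_ne_top μ _)).mpr hμ)]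

variable {d : ℕ → ℝ} {J : ℕ} {Yp : ℕ → Ω → ℝ} {W : Ω → ℝ}

lemma IndepFun.comp_outcomeAt {Z : Ω → β}
    (h : IndepFun Z (fun ω => ((fun i : Fin J => Yp (i + 1) ω), W ω)) μ) :
    IndepFun Z (fun ω => outcomeAt d J (Yp · ω) (W ω)) μ := by
  have hcomp : (fun ω => outcomeAt d J (Yp · ω) (W ω))
      = (fun q : (Fin J → ℝ) × ℝ => ∑ i : Fin J, q.1 i * if q.2 = d (i + 1) then 1 else 0) ∘
        fun ω => ((fun i : Fin J => Yp (i + 1) ω), W ω) :=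
    funext fun ω => sum_Icc_one_eq_sum_fin _ J
  rw [hcomp]
  exact h.comp measurable_id (measurable_outcomeAt_fin d J)

lemma setIntegral_div_eq_integral_outcomeAt [IsFiniteMeasure μ] [MeasurableSingletonClass β]
    {Z : Ω → β} (hZ : Measurable Z) {b : β} (hb : μ {ω | Z ω = b} ≠ 0)
    (hY : ∀ j, Integrable (Yp j) μ) (hW : Measurable W)
    (hind : IndepFun Z (fun ω => ((fun i : Fin J => Yp (i + 1) ω), W ω)) μ)
    {Y : Ω → ℝ} (hYW : ∀ ω, Z ω = b → Y ω = outcomeAt d J (Yp · ω) (W ω)) :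
    (∫ ω in {ω | Z ω = b}, Y ω ∂μ) / μ.real {ω | Z ω = b}
      = ∫ ω, outcomeAt d J (Yp · ω) (W ω) ∂μ := by
  have hZb : MeasurableSet {ω | Z ω = b} := hZ (measurableSet_singleton b)
  rw [setIntegral_congr_fun hZb hYW]
  exact hind.comp_outcomeAt.setIntegral_preimage_div_eq_integral hZ
    (integrable_outcomeAt hY hW).aemeasurable (measurableSet_singleton b) hb

end ProbabilityTheory

theorem acr_numerator_decomposition_general
    {Ω : Type*} [MeasurableSpace Ω] (μ : Measure Ω) [IsProbabilityMeasure μ]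
    (J : ℕ) (d : ℕ → ℝ)
    (hd : ∀ j k, 1 ≤ j → j < k → k ≤ J → d j < d k)
    (Yp : ℕ → Ω → ℝ) (hYint : ∀ j, Integrable (Yp j) μ)
    (Dz Dz' : Ω → ℝ) (hDzm : Measurable Dz) (hDz'm : Measurable Dz')
    (hDzval : ∀ ω, ∃ j, 1 ≤ j ∧ j ≤ J ∧ Dz ω = d j)
    (hDz'val : ∀ ω, ∃ j, 1 ≤ j ∧ j ≤ J ∧ Dz' ω = d j)
    (hmono : ∀ᵐ ω ∂μ, Dz ω ≤ Dz' ω)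
    (Z : Ω → Bool) (hZm : Measurable Z)
    (hz : 0 < μ {ω | Z ω = false}) (hz' : 0 < μ {ω | Z ω = true})
    (hindep : IndepFun Z
      (fun ω => ((fun j : Fin J => Yp ((j : ℕ) + 1) ω), Dz ω, Dz' ω)) μ)
    (D Y : Ω → ℝ)
    (hD : ∀ ω, D ω = if Z ω = true then Dz' ω else Dz ω)
    (hY : ∀ ω, Y ω = ∑ j ∈ Finset.Icc 1 J, Yp j ω * (if D ω = d j then 1 else 0)) :
    (∫ ω in {ω | Z ω = true}, Y ω ∂μ) / (μ {ω | Z ω = true}).toReal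
      - (∫ ω in {ω | Z ω = false}, Y ω ∂μ) / (μ {ω | Z ω = false}).toReal
    = ∑ j ∈ Finset.Icc 2 J,
        ∫ ω in {ω | d j ≤ Dz' ω ∧ Dz ω < d j}, (Yp j ω - Yp (j - 1) ω) ∂μ := by
  have hdmono : StrictMonoOn d (Set.Icc 1 J) := fun j hj k hk hjk => hd j k hj.1 hjk hk.2
  have hpair : ∀ π : ℝ × ℝ → ℝ, Measurable π →
      IndepFun Z (fun ω => ((fun i : Fin J => Yp (i + 1) ω), π (Dz ω, Dz' ω))) μ := fun π hπ =>
    hindep.comp measurable_id (measurable_fst.prodMk (hπ.comp measurable_snd))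
  have hset : ∀ j, MeasurableSet {ω | d j ≤ Dz' ω ∧ Dz ω < d j} := fun j =>
    (measurableSet_le measurable_const hDz'm).inter (measurableSet_lt hDzm measurable_const)
  have hdiff : (fun ω => outcomeAt d J (Yp · ω) (Dz' ω) - outcomeAt d J (Yp · ω) (Dz ω))
      =ᵐ[μ] fun ω => ∑ j ∈ Icc 2 J,
        {ω | d j ≤ Dz' ω ∧ Dz ω < d j}.indicator (Yp j - Yp (j - 1)) ω := by
    filter_upwards [hmono] with ω hω
    obtain ⟨σ, hσ1, hσJ, hσ⟩ := hDzval ω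
    obtain ⟨τ, hτ1, hτJ, hτ⟩ := hDz'val ω
    simp only [Set.indicator_apply, Set.mem_ofPred_eq]
    exact outcomeAt_sub_outcomeAt hdmono ⟨σ, ⟨hσ1, hσJ⟩, hσ.symm⟩ ⟨τ, ⟨hτ1, hτJ⟩, hτ.symm⟩ hω _
  rw [← measureReal_def, ← measureReal_def,
    setIntegral_div_eq_integral_outcomeAt hZm hz'.ne' hYint hDz'm (hpair Prod.snd measurable_snd)
      fun ω h => by rw [hY, hD, if_pos h]; rfl,
    setIntegral_div_eq_integral_outcomeAt hZm hz.ne' hYint hDzm (hpair Prod.fst measurable_fst)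
      fun ω h => by rw [hY, hD, if_neg (by simp [h])]; rfl,
    ← integral_sub (integrable_outcomeAt hYint hDz'm) (integrable_outcomeAt hYint hDzm),
    integral_congr_ae hdiff,
    integral_finsetSum _ fun j _ => ((hYint j).sub (hYint (j - 1))).indicator (hset j)]
  exact sum_congr rfl fun j _ => integral_indicator (hset j)

/-- Numerator decomposition in the ACR identification theorem for a multivalued
ordered treatment under pairwise instrument validity. Treatment values are
`d 1 < d 2 < ⋯ < d J`; `Z : Ω → Bool` encodes the instrument pair
(`false` = z, `true` = z'). -/
theorem acr_numerator_decomposition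
    {Ω : Type*} [MeasurableSpace Ω] (μ : Measure Ω) [IsProbabilityMeasure μ]
    (J : ℕ) (hJ : 1 ≤ J) (d : ℕ → ℝ)
    (hd : ∀ j k, 1 ≤ j → j < k → k ≤ J → d j < d k)
    (Yp : ℕ → Ω → ℝ) (hYint : ∀ j, Integrable (Yp j) μ)
    (hYm : ∀ j, Measurable (Yp j))
    (Dz Dz' : Ω → ℝ) (hDzm : Measurable Dz) (hDz'm : Measurable Dz')
    (hDzval : ∀ ω, ∃ j, 1 ≤ j ∧ j ≤ J ∧ Dz ω = d j)
    (hDz'val : ∀ ω, ∃ j, 1 ≤ j ∧ j ≤ J ∧ Dz' ω = d j)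
    (hmono : ∀ᵐ ω ∂μ, Dz ω ≤ Dz' ω)
    (Z : Ω → Bool) (hZm : Measurable Z)
    (hz : 0 < μ {ω | Z ω = false}) (hz' : 0 < μ {ω | Z ω = true})
    (hindep : IndepFun Z
      (fun ω => ((fun j : Fin J => Yp ((j : ℕ) + 1) ω), Dz ω, Dz' ω)) μ)
    (D Y : Ω → ℝ)
    (hD : ∀ ω, D ω = if Z ω = true then Dz' ω else Dz ω)
    (hY : ∀ ω, Y ω = ∑ j ∈ Finset.Icc 1 J, Yp j ω * (if D ω = d j then 1 else 0)) :
    (∫ ω in {ω | Z ω = true}, Y ω ∂μ) / (μ {ω | Z ω = true}).toReal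
      - (∫ ω in {ω | Z ω = false}, Y ω ∂μ) / (μ {ω | Z ω = false}).toReal
    = ∑ j ∈ Finset.Icc 2 J,
        ∫ ω in {ω | d j ≤ Dz' ω ∧ Dz ω < d j}, (Yp j ω - Yp (j - 1) ω) ∂μ :=
  acr_numerator_decomposition_general μ J d hd Yp hYint Dz Dz' hDzm hDz'm hDzval hDz'val hmono Z hZm
    hz hz' hindep D Y hD hY
end

section
/- Let (Ω, 𝒜, ℙ) be a probability space, let d₁ < d₂ < ⋯ < d_J be real numbers, and let D_z, D_{z'} : Ω → {d₁,…,d_J} satisfy D_{z'} ≥ D_z almost surely. Let Z : Ω → {z, z'} with ℙ(Z=z) > 0, ℙ(Z=z') > 0 be independent of (D_z, D_{z'}), and define D = D_z·1{Z=z} + D_{z'}·1{Z=z'}. Then E[D | Z=z'] − E[D | Z=z] = Σ_{j=2}^{J} (d_j − d_{j−1})·ℙ(D_{z'} ≥ d_j > D_z). -/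
open MeasureTheory ProbabilityTheory

/-! By independence, the mean of `D` on `{Z = z'}` is the plain mean of `D_{z'}`, and likewise
for `z`. Pointwise, if `D_z = d_a ≤ d_b = D_{z'}` then `d_b - d_a = ∑_{a < j ≤ b} (d_j - d_{j-1})`,
and `a < j ≤ b` is exactly the event `D_{z'} ≥ d_j > D_z`; integrating gives the jump
probabilities. -/

theorem Finset.sum_Ioc_sub_pred_s2 {M : Type*} [AddCommGroup M] (f : ℕ → M) {a b : ℕ}
    (hab : a ≤ b) : ∑ j ∈ Finset.Ioc a b, (f j - f (j - 1)) = f b - f a := by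
  induction b, hab using Nat.le_induction with
  | base => simp
  | succ b hab ih =>
    rw [Finset.sum_Ioc_succ_top hab, ih, Nat.add_sub_cancel]
    abel

theorem StrictMonoOn.sub_eq_sum_Icc_jumps {d : ℕ → ℝ} {J : ℕ}
    (hd : StrictMonoOn d (Set.Icc 1 J)) {x y : ℝ}
    (hx : x ∈ d '' Set.Icc 1 J) (hy : y ∈ d '' Set.Icc 1 J) (hxy : x ≤ y) :
    y - x = ∑ j ∈ Finset.Icc 2 J, if d j ≤ y ∧ x < d j then d j - d (j - 1) else 0 := by
  obtain ⟨a, ha, rfl⟩ := hx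
  obtain ⟨b, hb, rfl⟩ := hy
  have hab : a ≤ b := (hd.le_iff_le ha hb).mp hxy
  have hjumps : (Finset.Icc 2 J).filter (fun j => d j ≤ d b ∧ d a < d j) = Finset.Ioc a b := by
    ext j
    simp only [Finset.mem_filter, Finset.mem_Icc, Finset.mem_Ioc]
    constructor
    · rintro ⟨⟨hj2, hjJ⟩, hjb, haj⟩
      have hj : j ∈ Set.Icc 1 J := ⟨by omega, hjJ⟩
      exact ⟨(hd.lt_iff_lt ha hj).mp haj, (hd.le_iff_le hj hb).mp hjb⟩
    · rintro ⟨haj, hjb⟩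
      have hj : j ∈ Set.Icc 1 J := ⟨(ha.1.trans_lt haj).le, hjb.trans hb.2⟩
      have hj2 : 2 ≤ j := by have := ha.1; omega
      exact ⟨⟨hj2, hj.2⟩, (hd.le_iff_le hj hb).mpr hjb, (hd.lt_iff_lt ha hj).mpr haj⟩
  rw [← Finset.sum_filter, hjumps, Finset.sum_Ioc_sub_pred_s2 d hab]

section Integrals

variable {Ω : Type*} [MeasurableSpace Ω] {μ : Measure Ω}

theorem integrable_of_forall_mem_finite [IsFiniteMeasure μ] {f : Ω → ℝ}
    (hf : AEStronglyMeasurable f μ) {s : Set ℝ} (hs : s.Finite) (hfs : ∀ ω, f ω ∈ s) :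
    Integrable f μ := by
  obtain ⟨C, hC⟩ := hs.isBounded.exists_norm_le
  exact .of_bound hf C (.of_forall fun ω => hC _ (hfs ω))

theorem integral_sub_eq_sum_jumps [IsFiniteMeasure μ] {d : ℕ → ℝ} {J : ℕ}
    (hd : StrictMonoOn d (Set.Icc 1 J)) {X Y : Ω → ℝ} (hX : Measurable X) (hY : Measurable Y)
    (hXd : ∀ ω, X ω ∈ d '' Set.Icc 1 J) (hYd : ∀ ω, Y ω ∈ d '' Set.Icc 1 J)
    (hXY : ∀ᵐ ω ∂μ, X ω ≤ Y ω) :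
    ∫ ω, Y ω ∂μ - ∫ ω, X ω ∂μ
      = ∑ j ∈ Finset.Icc 2 J, (d j - d (j - 1)) * μ.real {ω | d j ≤ Y ω ∧ X ω < d j} := by
  have hfin : (d '' Set.Icc 1 J).Finite := (Set.finite_Icc 1 J).image d
  have hjump_meas : ∀ j, MeasurableSet {ω | d j ≤ Y ω ∧ X ω < d j} := fun j =>
    (measurableSet_le measurable_const hY).inter (measurableSet_lt hX measurable_const)
  have hpointwise : (fun ω => Y ω - X ω) =ᵐ[μ] fun ω => ∑ j ∈ Finset.Icc 2 J,
      {ω | d j ≤ Y ω ∧ X ω < d j}.indicator (fun _ => d j - d (j - 1)) ω := by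
    filter_upwards [hXY] with ω hω
    simp only [Set.indicator_apply, Set.mem_ofPred_eq]
    exact hd.sub_eq_sum_Icc_jumps (hXd ω) (hYd ω) hω
  rw [← integral_sub (integrable_of_forall_mem_finite hY.aestronglyMeasurable hfin hYd)
      (integrable_of_forall_mem_finite hX.aestronglyMeasurable hfin hXd),
    integral_congr_ae hpointwise,
    integral_finsetSum _ fun j _ => (integrable_const _).indicator (hjump_meas j)]
  refine Finset.sum_congr rfl fun j _ => ?_
  rw [integral_indicator_const _ (hjump_meas j), smul_eq_mul, mul_comm]

theorem ProbabilityTheory.IndepFun.setIntegral_preimage {β : Type*} [MeasurableSpace β]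
    {Z : Ω → β} {X : Ω → ℝ} (hZX : IndepFun Z X μ) (hZ : Measurable Z)
    (hX : AEStronglyMeasurable X μ) {s : Set β} (hs : MeasurableSet s) :
    ∫ ω in Z ⁻¹' s, X ω ∂μ = μ.real (Z ⁻¹' s) * ∫ ω, X ω ∂μ := by
  have hindep : IndepFun ((Z ⁻¹' s).indicator fun _ => (1 : ℝ)) X μ :=
    hZX.comp (measurable_const.indicator hs) measurable_id
  have hprod : (Z ⁻¹' s).indicator X = (Z ⁻¹' s).indicator (fun _ => (1 : ℝ)) * X := by
    ext ω
    by_cases hω : ω ∈ Z ⁻¹' s <;> simp [hω]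
  rw [← integral_indicator (hZ hs), hprod, hindep.integral_mul_eq_mul_integral
      (measurable_const.indicator (hZ hs)).aestronglyMeasurable hX,
    integral_indicator_const _ (hZ hs), smul_eq_mul, mul_one]

theorem ProbabilityTheory.IndepFun.setIntegral_preimage_div_measureReal [IsFiniteMeasure μ]
    {β : Type*} [MeasurableSpace β] {Z : Ω → β} {X : Ω → ℝ} (hZX : IndepFun Z X μ)
    (hZ : Measurable Z) (hX : AEStronglyMeasurable X μ) {s : Set β} (hs : MeasurableSet s)
    (hpos : μ (Z ⁻¹' s) ≠ 0) :
    (∫ ω in Z ⁻¹' s, X ω ∂μ) / μ.real (Z ⁻¹' s) = ∫ ω, X ω ∂μ := by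
  rw [hZX.setIntegral_preimage hZ hX hs,
    mul_div_cancel_left₀ _ ((measureReal_ne_zero_iff).mpr hpos)]

end Integrals

theorem acr_denominator_identity_general
    {Ω : Type*} [MeasurableSpace Ω] (μ : Measure Ω) [IsProbabilityMeasure μ]
    (J : ℕ) (d : ℕ → ℝ)
    (hd : ∀ j k, 1 ≤ j → j < k → k ≤ J → d j < d k)
    (Dz Dz' : Ω → ℝ) (hDzm : Measurable Dz) (hDz'm : Measurable Dz')
    (hDzval : ∀ ω, ∃ j, 1 ≤ j ∧ j ≤ J ∧ Dz ω = d j)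
    (hDz'val : ∀ ω, ∃ j, 1 ≤ j ∧ j ≤ J ∧ Dz' ω = d j)
    (hmono : ∀ᵐ ω ∂μ, Dz ω ≤ Dz' ω)
    (Z : Ω → Bool) (hZm : Measurable Z)
    (hz : 0 < μ {ω | Z ω = false}) (hz' : 0 < μ {ω | Z ω = true})
    (hindep : IndepFun Z (fun ω => (Dz ω, Dz' ω)) μ)
    (D : Ω → ℝ)
    (hD : ∀ ω, D ω = if Z ω = true then Dz' ω else Dz ω) :
    (∫ ω in {ω | Z ω = true}, D ω ∂μ) / (μ {ω | Z ω = true}).toReal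
      - (∫ ω in {ω | Z ω = false}, D ω ∂μ) / (μ {ω | Z ω = false}).toReal
    = ∑ j ∈ Finset.Icc 2 J,
        (d j - d (j - 1)) * (μ {ω | d j ≤ Dz' ω ∧ Dz ω < d j}).toReal := by
  have hd_mono : StrictMonoOn d (Set.Icc 1 J) := fun j hj k hk hjk => hd j k hj.1 hjk hk.2
  have hval : ∀ X : Ω → ℝ, (∀ ω, ∃ j, 1 ≤ j ∧ j ≤ J ∧ X ω = d j) →
      ∀ ω, X ω ∈ d '' Set.Icc 1 J := fun X hX ω => by
    obtain ⟨j, hj1, hjJ, hj⟩ := hX ω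
    exact ⟨j, ⟨hj1, hjJ⟩, hj.symm⟩
  have hmean : ∀ (b : Bool) (X : Ω → ℝ), Measurable X → IndepFun Z X μ →
      (∀ ω ∈ {ω | Z ω = b}, D ω = X ω) → 0 < μ {ω | Z ω = b} →
      (∫ ω in {ω | Z ω = b}, D ω ∂μ) / (μ {ω | Z ω = b}).toReal = ∫ ω, X ω ∂μ := by
    intro b X hX hZX hDX hb
    rw [setIntegral_congr_fun (s := {ω | Z ω = b}) (hZm (measurableSet_singleton b)) hDX]
    exact hZX.setIntegral_preimage_div_measureReal hZm hX.aestronglyMeasurable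
      (measurableSet_singleton b) hb.ne'
  rw [hmean true Dz' hDz'm (hindep.comp measurable_id measurable_snd)
      (fun ω hω => by simp_all) hz',
    hmean false Dz hDzm (hindep.comp measurable_id measurable_fst)
      (fun ω hω => by simp_all) hz]
  exact integral_sub_eq_sum_jumps hd_mono hDzm hDz'm (hval Dz hDzval) (hval Dz' hDz'val) hmono

/-- Denominator (first-stage) identity for a multivalued ordered treatment:
the difference in conditional means of the treatment across the two instrument
values equals the telescoping sum of jump probabilities weighted by treatment
increments. `Z : Ω → Bool` encodes the instrument pair (`false` = z, `true` = z'). -/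
theorem acr_denominator_identity
    {Ω : Type*} [MeasurableSpace Ω] (μ : Measure Ω) [IsProbabilityMeasure μ]
    (J : ℕ) (hJ : 1 ≤ J) (d : ℕ → ℝ)
    (hd : ∀ j k, 1 ≤ j → j < k → k ≤ J → d j < d k)
    (Dz Dz' : Ω → ℝ) (hDzm : Measurable Dz) (hDz'm : Measurable Dz')
    (hDzval : ∀ ω, ∃ j, 1 ≤ j ∧ j ≤ J ∧ Dz ω = d j)
    (hDz'val : ∀ ω, ∃ j, 1 ≤ j ∧ j ≤ J ∧ Dz' ω = d j)
    (hmono : ∀ᵐ ω ∂μ, Dz ω ≤ Dz' ω)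
    (Z : Ω → Bool) (hZm : Measurable Z)
    (hz : 0 < μ {ω | Z ω = false}) (hz' : 0 < μ {ω | Z ω = true})
    (hindep : IndepFun Z (fun ω => (Dz ω, Dz' ω)) μ)
    (D : Ω → ℝ)
    (hD : ∀ ω, D ω = if Z ω = true then Dz' ω else Dz ω) :
    (∫ ω in {ω | Z ω = true}, D ω ∂μ) / (μ {ω | Z ω = true}).toReal
      - (∫ ω in {ω | Z ω = false}, D ω ∂μ) / (μ {ω | Z ω = false}).toReal
    = ∑ j ∈ Finset.Icc 2 J,
        (d j - d (j - 1)) * (μ {ω | d j ≤ Dz' ω ∧ Dz ω < d j}).toReal :=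
  acr_denominator_identity_general μ J d hd Dz Dz' hDzm hDz'm hDzval hDz'val hmono Z hZm hz hz'
    hindep D hD
end

section
/- Let 𝒮 be a finite set, and let Z_M, Z_0, Z_P ⊆ 𝒮 with Z_M ⊆ Z_0. Let c : 𝒮 → ℝ be any function, and for each subset A ⊆ 𝒮 define the vector β(A) ∈ ℝ^𝒮 by β(A)_s = 1{s ∈ A}·c(s). Then ‖β(Z_0 ∩ Z_P) − β(Z_M)‖₂ ≤ ‖β(Z_P) − β(Z_M)‖₂, where ‖·‖₂ is the Euclidean norm on ℝ^𝒮. -/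
/-! On `Z0` both coordinates agree, and off `Z0 ⊇ ZM` the left coordinate vanishes, so the
inequality already holds coordinatewise. -/

theorem sq_ite_inter_sub_ite_le_sq_ite_sub_ite {α R : Type*} [DecidableEq α] [CommRing R]
    [LinearOrder R] [IsStrictOrderedRing R] {ZM Z0 : Finset α} (hsub : ZM ⊆ Z0)
    (ZP : Finset α) (x : R) (s : α) :
    ((if s ∈ Z0 ∩ ZP then x else 0) - (if s ∈ ZM then x else 0)) ^ 2
      ≤ ((if s ∈ ZP then x else 0) - (if s ∈ ZM then x else 0)) ^ 2 := by
  by_cases h0 : s ∈ Z0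
  · simp [h0]
  · rw [if_neg fun h => h0 (Finset.mem_inter.1 h).1, if_neg fun h => h0 (hsub h)]
    simpa using sq_nonneg ((if s ∈ ZP then x else 0) - 0)

/-- Combinatorial core of the bias-reduction theorem: intersecting the presumed
validity set `ZP` with the pseudo-validity set `Z0 ⊇ ZM` never increases the
Euclidean distance of the indicator-weighted vector to the truth `β(ZM)`. -/
theorem bias_reduction_core
    {𝒮 : Type*} [Fintype 𝒮] [DecidableEq 𝒮]
    (ZM Z0 ZP : Finset 𝒮) (hsub : ZM ⊆ Z0) (c : 𝒮 → ℝ) :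
    Real.sqrt (∑ s : 𝒮,
        ((if s ∈ Z0 ∩ ZP then c s else 0) - (if s ∈ ZM then c s else 0)) ^ 2)
      ≤ Real.sqrt (∑ s : 𝒮,
        ((if s ∈ ZP then c s else 0) - (if s ∈ ZM then c s else 0)) ^ 2) :=
  Real.sqrt_le_sqrt <| Finset.sum_le_sum fun s _ =>
    sq_ite_inter_sub_ite_le_sq_ite_sub_ite hsub ZP (c s) s
end

section
/- Let D be a finite type (the unordered treatment values), L ∈ ℕ, and let r : Fin 2 → Fin L → D be a 2×L matrix with entries in D. Suppose that for all d, d', d'' ∈ D with d' ≠ d and d'' ≠ d, there is no pair of columns l, l' such that (r 0 l, r 0 l', r 1 l, r 1 l') = (d, d', d'', d) or (d', d, d, d''). Then for every d ∈ D, either 1{r 0 l = d} ≤ 1{r 1 l = d} for all l ∈ Fin L, or 1{r 1 l = d} ≤ 1{r 0 l = d} for all l ∈ Fin L. -/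
theorem forall_imp_or_forall_imp_of_not_exists {ι : Type*} {P Q : ι → Prop}
    (h : ¬ ∃ i j, (P i ∧ ¬ Q i) ∧ (Q j ∧ ¬ P j)) :
    (∀ i, P i → Q i) ∨ (∀ i, Q i → P i) := by
  by_contra! ⟨⟨i, hPi, hQi⟩, ⟨j, hQj, hPj⟩⟩
  exact h ⟨i, j, ⟨hPi, hQi⟩, hQj, hPj⟩

theorem ite_one_zero_le_ite_one_zero_iff {p q : Prop} [Decidable p] [Decidable q] :
    (if p then (1 : ℕ) else 0) ≤ (if q then 1 else 0) ↔ (p → q) := by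
  by_cases hp : p <;> by_cases hq : q <;> simp [hp, hq]

theorem no_switch_implies_indicator_comparable_general
    {D : Type*} [DecidableEq D] (L : ℕ) (r : Fin 2 → Fin L → D)
    (h : ∀ d d' d'' : D, d' ≠ d → d'' ≠ d →
      ¬ ∃ l l' : Fin L,
        (r 0 l = d ∧ r 0 l' = d' ∧ r 1 l = d'' ∧ r 1 l' = d) ∨
        (r 0 l = d' ∧ r 0 l' = d ∧ r 1 l = d ∧ r 1 l' = d'')) :
    ∀ d : D,
      (∀ l, (if r 0 l = d then (1 : ℕ) else 0) ≤ (if r 1 l = d then 1 else 0))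
      ∨ (∀ l, (if r 1 l = d then (1 : ℕ) else 0) ≤ (if r 0 l = d then 1 else 0)) := by
  intro d
  -- a column with only `r 0 = d` and one with only `r 1 = d` form the first forbidden pattern
  have no_switch : ¬ ∃ l l', (r 0 l = d ∧ r 1 l ≠ d) ∧ (r 1 l' = d ∧ r 0 l' ≠ d) := by
    rintro ⟨l, l', ⟨h0l, h1l⟩, h1l', h0l'⟩
    exact h d (r 0 l') (r 1 l) h0l' h1l ⟨l, l', .inl ⟨h0l, rfl, rfl, h1l'⟩⟩
  simpa only [ite_one_zero_le_ite_one_zero_iff] using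
    forall_imp_or_forall_imp_of_not_exists no_switch

/-- Absence of the forbidden 2×2 submatrices in a 2×L matrix with entries in a
finite treatment set `D` implies, for each treatment value `d`, pointwise
comparability of the two rows of the indicator matrix `1{r = d}`. -/
theorem no_switch_implies_indicator_comparable
    {D : Type*} [Fintype D] [DecidableEq D] (L : ℕ) (r : Fin 2 → Fin L → D)
    (h : ∀ d d' d'' : D, d' ≠ d → d'' ≠ d →
      ¬ ∃ l l' : Fin L,
        (r 0 l = d ∧ r 0 l' = d' ∧ r 1 l = d'' ∧ r 1 l' = d) ∨
        (r 0 l = d' ∧ r 0 l' = d ∧ r 1 l = d ∧ r 1 l' = d'')) :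
    ∀ d : D,
      (∀ l, (if r 0 l = d then (1 : ℕ) else 0) ≤ (if r 1 l = d then 1 else 0))
      ∨ (∀ l, (if r 1 l = d then (1 : ℕ) else 0) ≤ (if r 0 l = d then 1 else 0)) :=
  no_switch_implies_indicator_comparable_general L r h
end

section
/- Let (Ω, 𝒜, ℙ) be a probability space with random variables Y₀, Y₁ : Ω → ℝ, D_z, D_{z'} : Ω → {0,1}, and Z : Ω → 𝒵 (𝒵 finite, containing z and z' with ℙ(Z=z) > 0, ℙ(Z=z') > 0). Assume Z is independent of (Y₀, Y₁, D_z, D_{z'}) and D_{z'} ≥ D_z almost surely. Define D = D_z on {Z=z}, D = D_{z'} on {Z=z'}, and Y = Y₁D + Y₀(1−D) on {Z ∈ {z,z'}}. Then for every Borel set B ⊆ ℝ: ℙ(Y ∈ B, D = 1 | Z = z) ≤ ℙ(Y ∈ B, D = 1 | Z = z') and ℙ(Y ∈ B, D = 0 | Z = z) ≥ ℙ(Y ∈ B, D = 0 | Z = z'). -/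
/-!
On `{Z = c}` the observed events are events about potential outcomes:
`{Y ∈ B, D = 1} = {Y₁ ∈ B, D_c = 1}` and `{Y ∈ B, D = 0} = {Y₀ ∈ B, D_c = 0}`. Since `Z` is
independent of the potential outcomes, conditioning on `Z = c` turns these into the unconditional
probabilities `ℙ(Y₁ ∈ B, D_c = 1)` and `ℙ(Y₀ ∈ B, D_c = 0)`. For binary `D_z ≤ D_{z'}` a.s. we have
`{D_z = 1} ⊆ {D_{z'} = 1}` and `{D_{z'} = 0} ⊆ {D_z = 0}` a.s., which gives both inequalities.
-/

open MeasureTheory ProbabilityTheory Set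

namespace ProbabilityTheory

theorem IndepFun.measure_inter_preimage_div_eq {Ω α β : Type*} [MeasurableSpace Ω]
    [MeasurableSpace α] [MeasurableSpace β] {μ : Measure Ω} [IsFiniteMeasure μ]
    {Z : Ω → α} {W : Ω → β} (h : IndepFun Z W μ) {A : Set α} {S : Set β}
    (hA : MeasurableSet A) (hS : MeasurableSet S) (hA0 : μ (Z ⁻¹' A) ≠ 0) :
    (μ (Z ⁻¹' A ∩ W ⁻¹' S)).toReal / (μ (Z ⁻¹' A)).toReal = (μ (W ⁻¹' S)).toReal := by
  have hA0' : (μ (Z ⁻¹' A)).toReal ≠ 0 := ENNReal.toReal_ne_zero.2 ⟨hA0, measure_ne_top μ _⟩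
  rw [h.measure_inter_preimage_eq_mul A S hA hS, ENNReal.toReal_mul, mul_div_cancel_left₀ _ hA0']

end ProbabilityTheory

section PotentialOutcomes

variable {Ω α : Type*} {Y D Y0 Y1 Dc : Ω → ℝ} {Z : Ω → α} {c : α}

theorem setOf_treated_eq (hD : ∀ ω, Z ω = c → D ω = Dc ω)
    (hY : ∀ ω, Z ω = c → Y ω = Y1 ω * D ω + Y0 ω * (1 - D ω)) (B : Set ℝ) :
    {ω | Y ω ∈ B ∧ D ω = 1 ∧ Z ω = c} = Z ⁻¹' {c} ∩ (fun ω => (Y1 ω, Dc ω)) ⁻¹' (B ×ˢ {1}) := by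
  ext ω
  by_cases hZ : Z ω = c
  · simp +contextual [hY ω hZ, hD ω hZ, hZ]
  · simp [hZ]

theorem setOf_untreated_eq (hD : ∀ ω, Z ω = c → D ω = Dc ω)
    (hY : ∀ ω, Z ω = c → Y ω = Y1 ω * D ω + Y0 ω * (1 - D ω)) (B : Set ℝ) :
    {ω | Y ω ∈ B ∧ D ω = 0 ∧ Z ω = c} = Z ⁻¹' {c} ∩ (fun ω => (Y0 ω, Dc ω)) ⁻¹' (B ×ˢ {0}) := by
  ext ω
  by_cases hZ : Z ω = c
  · simp +contextual [hY ω hZ, hD ω hZ, hZ]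
  · simp [hZ]

end PotentialOutcomes

section Monotonicity

variable {Ω : Type*} [MeasurableSpace Ω] {μ : Measure Ω} {V D D' : Ω → ℝ}

theorem measure_treated_le (hD' : ∀ ω, D' ω ≤ 1) (hmono : ∀ᵐ ω ∂μ, D ω ≤ D' ω) (B : Set ℝ) :
    μ ((fun ω => (V ω, D ω)) ⁻¹' (B ×ˢ {1})) ≤ μ ((fun ω => (V ω, D' ω)) ⁻¹' (B ×ˢ {1})) := by
  refine measure_mono_ae (hmono.mono fun ω hω ⟨hVB, hD1⟩ => ⟨hVB, ?_⟩)
  exact le_antisymm (hD' ω) (hD1 ▸ hω)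

theorem measure_untreated_le (hD : ∀ ω, 0 ≤ D ω) (hmono : ∀ᵐ ω ∂μ, D ω ≤ D' ω) (B : Set ℝ) :
    μ ((fun ω => (V ω, D' ω)) ⁻¹' (B ×ˢ {0})) ≤ μ ((fun ω => (V ω, D ω)) ⁻¹' (B ×ˢ {0})) := by
  refine measure_mono_ae (hmono.mono fun ω hω ⟨hVB, hD0⟩ => ⟨hVB, ?_⟩)
  exact le_antisymm (hD0 ▸ hω) (hD ω)

end Monotonicity

theorem kitagawa_testable_implications_general
    {Ω : Type*} [MeasurableSpace Ω] (μ : Measure Ω) [IsProbabilityMeasure μ]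
    {𝒵 : Type*} [MeasurableSpace 𝒵] [MeasurableSingletonClass 𝒵]
    (Y0 Y1 Dz Dz' : Ω → ℝ) (Z : Ω → 𝒵) (z z' : 𝒵)
    (hDz01 : ∀ ω, Dz ω = 0 ∨ Dz ω = 1) (hDz'01 : ∀ ω, Dz' ω = 0 ∨ Dz' ω = 1)
    (hz : 0 < μ {ω | Z ω = z}) (hz' : 0 < μ {ω | Z ω = z'})
    (hindep : IndepFun Z (fun ω => (Y0 ω, Y1 ω, Dz ω, Dz' ω)) μ)
    (hmono : ∀ᵐ ω ∂μ, Dz ω ≤ Dz' ω)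
    (D Y : Ω → ℝ)
    (hDzeq : ∀ ω, Z ω = z → D ω = Dz ω)
    (hDz'eq : ∀ ω, Z ω = z' → D ω = Dz' ω)
    (hYeq : ∀ ω, (Z ω = z ∨ Z ω = z') → Y ω = Y1 ω * D ω + Y0 ω * (1 - D ω)) :
    ∀ B : Set ℝ, MeasurableSet B →
      (μ {ω | Y ω ∈ B ∧ D ω = 1 ∧ Z ω = z}).toReal / (μ {ω | Z ω = z}).toReal
        ≤ (μ {ω | Y ω ∈ B ∧ D ω = 1 ∧ Z ω = z'}).toReal / (μ {ω | Z ω = z'}).toReal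
      ∧ (μ {ω | Y ω ∈ B ∧ D ω = 0 ∧ Z ω = z'}).toReal / (μ {ω | Z ω = z'}).toReal
        ≤ (μ {ω | Y ω ∈ B ∧ D ω = 0 ∧ Z ω = z}).toReal / (μ {ω | Z ω = z}).toReal := by
  intro B hB
  have hYz : ∀ ω, Z ω = z → Y ω = Y1 ω * D ω + Y0 ω * (1 - D ω) := fun ω h => hYeq ω (.inl h)
  have hYz' : ∀ ω, Z ω = z' → Y ω = Y1 ω * D ω + Y0 ω * (1 - D ω) := fun ω h => hYeq ω (.inr h)
  have hY1Dz : IndepFun Z (fun ω => (Y1 ω, Dz ω)) μ :=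
    hindep.comp measurable_id (measurable_snd.fst.prodMk measurable_snd.snd.fst)
  have hY1Dz' : IndepFun Z (fun ω => (Y1 ω, Dz' ω)) μ :=
    hindep.comp measurable_id (measurable_snd.fst.prodMk measurable_snd.snd.snd)
  have hY0Dz : IndepFun Z (fun ω => (Y0 ω, Dz ω)) μ :=
    hindep.comp measurable_id (measurable_fst.prodMk measurable_snd.snd.fst)
  have hY0Dz' : IndepFun Z (fun ω => (Y0 ω, Dz' ω)) μ :=
    hindep.comp measurable_id (measurable_fst.prodMk measurable_snd.snd.snd)
  have hcond : ∀ {c} {V Dc : Ω → ℝ} {d : ℝ}, 0 < μ {ω | Z ω = c} →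
      IndepFun Z (fun ω => (V ω, Dc ω)) μ →
      (μ (Z ⁻¹' {c} ∩ (fun ω => (V ω, Dc ω)) ⁻¹' (B ×ˢ {d}))).toReal / (μ {ω | Z ω = c}).toReal
        = (μ ((fun ω => (V ω, Dc ω)) ⁻¹' (B ×ˢ {d}))).toReal := fun hc hi =>
    hi.measure_inter_preimage_div_eq (measurableSet_singleton _)
      (hB.prod (measurableSet_singleton _)) hc.ne'
  constructor
  · rw [setOf_treated_eq hDzeq hYz, setOf_treated_eq hDz'eq hYz', hcond hz hY1Dz,
      hcond hz' hY1Dz']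
    refine ENNReal.toReal_mono (measure_ne_top μ _) (measure_treated_le (fun ω => ?_) hmono B)
    rcases hDz'01 ω with h | h <;> simp [h]
  · rw [setOf_untreated_eq hDzeq hYz, setOf_untreated_eq hDz'eq hYz', hcond hz hY0Dz,
      hcond hz' hY0Dz']
    refine ENNReal.toReal_mono (measure_ne_top μ _) (measure_untreated_le (fun ω => ?_) hmono B)
    rcases hDz01 ω with h | h <;> simp [h]

/-- Kitagawa-type testable implications of pairwise instrument validity for a
binary treatment: the joint subdistributions of `(Y, D)` given `Z` are nested
in the direction implied by monotonicity. -/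
theorem kitagawa_testable_implications
    {Ω : Type*} [MeasurableSpace Ω] (μ : Measure Ω) [IsProbabilityMeasure μ]
    {𝒵 : Type*} [Fintype 𝒵] [MeasurableSpace 𝒵] [MeasurableSingletonClass 𝒵]
    (Y0 Y1 Dz Dz' : Ω → ℝ) (Z : Ω → 𝒵) (z z' : 𝒵) (hne : z ≠ z')
    (hY0m : Measurable Y0) (hY1m : Measurable Y1)
    (hDzm : Measurable Dz) (hDz'm : Measurable Dz') (hZm : Measurable Z)
    (hDz01 : ∀ ω, Dz ω = 0 ∨ Dz ω = 1) (hDz'01 : ∀ ω, Dz' ω = 0 ∨ Dz' ω = 1)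
    (hz : 0 < μ {ω | Z ω = z}) (hz' : 0 < μ {ω | Z ω = z'})
    (hindep : IndepFun Z (fun ω => (Y0 ω, Y1 ω, Dz ω, Dz' ω)) μ)
    (hmono : ∀ᵐ ω ∂μ, Dz ω ≤ Dz' ω)
    (D Y : Ω → ℝ) (hDm : Measurable D) (hYm : Measurable Y)
    (hDzeq : ∀ ω, Z ω = z → D ω = Dz ω)
    (hDz'eq : ∀ ω, Z ω = z' → D ω = Dz' ω)
    (hYeq : ∀ ω, (Z ω = z ∨ Z ω = z') → Y ω = Y1 ω * D ω + Y0 ω * (1 - D ω)) :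
    ∀ B : Set ℝ, MeasurableSet B →
      (μ {ω | Y ω ∈ B ∧ D ω = 1 ∧ Z ω = z}).toReal / (μ {ω | Z ω = z}).toReal
        ≤ (μ {ω | Y ω ∈ B ∧ D ω = 1 ∧ Z ω = z'}).toReal / (μ {ω | Z ω = z'}).toReal
      ∧ (μ {ω | Y ω ∈ B ∧ D ω = 0 ∧ Z ω = z'}).toReal / (μ {ω | Z ω = z'}).toReal
        ≤ (μ {ω | Y ω ∈ B ∧ D ω = 0 ∧ Z ω = z}).toReal / (μ {ω | Z ω = z}).toReal :=
  kitagawa_testable_implications_general μ Y0 Y1 Dz Dz' Z z z' hDz01 hDz'01 hz hz' hindep hmono D Y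
    hDzeq hDz'eq hYeq
end

section
/- Under the setup of the previous inequality (finite treatment set 𝒟 = {d₁,…,d_J}, potential outcomes (Y_d), potential treatments D_z, D_{z'}, instrument Z ∈ {z,z'} independent of all potential variables with positive mass at both points, D = D_z1{Z=z} + D_{z'}1{Z=z'}, Y = Σ_d Y_d 1{D=d}), for any finite partitions P¹, …, P^J of ℝ into Borel sets, it holds that Σ_{A₁∈P¹} ⋯ Σ_{A_J∈P^J} min_{w∈{z,z'}} Σ_{j=1}^{J} ℙ(Y ∈ A_j, D = d_j | Z = w) ≥ 1. -/
/-!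
The cells `{Y_{d₁} ∈ A₁, …, Y_{d_J} ∈ A_J}` of the product partition have probabilities summing
to one. On such a cell intersected with `{Z = w}`, the observed outcome `Y = Y_D` lies in `A_j`
for `j = D`, so by independence of `Z` and the potential outcomes the cell's probability is at
most `∑ⱼ ℙ(Y ∈ A_j, D = d_j | Z = w)`, for each of the two instrument values `w`.
-/

open Function MeasureTheory ProbabilityTheory Set

section ProductPartition

variable {ι α : Type*} {κ : ι → Type*} (A : ∀ i, κ i → Set α)

lemma iUnion_univ_pi_eq_univ (hcover : ∀ i, ⋃ k, A i k = univ) :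
    ⋃ f : ∀ i, κ i, univ.pi (fun i => A i (f i)) = univ := by
  simp [iUnion_univ_pi, hcover]

lemma pairwise_disjoint_univ_pi (hdisj : ∀ i, Pairwise (Disjoint on A i)) :
    Pairwise (Disjoint on fun f : ∀ i, κ i => univ.pi fun i => A i (f i)) := fun f g hfg => by
  obtain ⟨i, hi⟩ := Function.ne_iff.1 hfg
  exact disjoint_univ_pi.2 ⟨i, hdisj i hi⟩

lemma sum_measureReal_preimage_univ_pi [Fintype ι] [DecidableEq ι] [Countable ι]
    [∀ i, Fintype (κ i)] [MeasurableSpace α] {Ω : Type*} [MeasurableSpace Ω] (μ : Measure Ω)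
    [IsFiniteMeasure μ] {X : Ω → ι → α} (hX : Measurable X) (hA : ∀ i k, MeasurableSet (A i k))
    (hcover : ∀ i, ⋃ k, A i k = univ) (hdisj : ∀ i, Pairwise (Disjoint on A i)) :
    ∑ f : ∀ i, κ i, μ.real (X ⁻¹' univ.pi fun i => A i (f i)) = μ.real univ := by
  rw [← measureReal_iUnion_fintype, ← preimage_iUnion, iUnion_univ_pi_eq_univ A hcover,
    preimage_univ]
  · exact (pairwise_disjoint_univ_pi A hdisj).mono fun f g h => h.preimage X
  · exact fun f => hX (MeasurableSet.univ_pi fun i => hA i (f i))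

end ProductPartition

lemma measureReal_preimage_univ_pi_le_sum_div {Ω ι α β : Type*} [MeasurableSpace Ω]
    [Fintype ι] [Countable ι] [MeasurableSpace α] [MeasurableSpace β] [MeasurableSingletonClass β]
    {μ : Measure Ω} [IsFiniteMeasure μ] {X : Ω → ι → α} {T : Ω → ι} {Y : Ω → α} {Z : Ω → β}
    (hY : ∀ ω, Y ω = X ω (T ω)) (hindep : IndepFun Z X μ) {A : ι → Set α}
    (hA : ∀ i, MeasurableSet (A i)) {w : β} (hw : μ {ω | Z ω = w} ≠ 0) :
    μ.real (X ⁻¹' univ.pi A) ≤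
      ∑ i, μ.real {ω | Y ω ∈ A i ∧ T ω = i ∧ Z ω = w} / μ.real {ω | Z ω = w} := by
  have hpos : 0 < μ.real {ω | Z ω = w} := ENNReal.toReal_pos hw (measure_ne_top μ _)
  have hsub : Z ⁻¹' {w} ∩ X ⁻¹' univ.pi A ⊆ ⋃ i, {ω | Y ω ∈ A i ∧ T ω = i ∧ Z ω = w} :=
    fun ω ⟨hZ, hX⟩ => mem_iUnion.2 ⟨T ω, hY ω ▸ hX (T ω) (mem_univ _), rfl, hZ⟩
  rw [← Finset.sum_div, le_div_iff₀ hpos]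
  calc μ.real (X ⁻¹' univ.pi A) * μ.real {ω | Z ω = w}
      = μ.real (Z ⁻¹' {w} ∩ X ⁻¹' univ.pi A) := by
        rw [measureReal_def, measureReal_def, measureReal_def, ← ENNReal.toReal_mul, mul_comm,
          hindep.measure_inter_preimage_eq_mul _ _ (measurableSet_singleton w)
            (MeasurableSet.univ_pi hA)]
        rfl
    _ ≤ μ.real (⋃ i, {ω | Y ω ∈ A i ∧ T ω = i ∧ Z ω = w}) := measureReal_mono hsub
    _ ≤ ∑ i, μ.real {ω | Y ω ∈ A i ∧ T ω = i ∧ Z ω = w} := measureReal_iUnion_fintype_le _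

theorem km_partition_lower_bound_general
    {Ω : Type*} [MeasurableSpace Ω] (μ : Measure Ω) [IsProbabilityMeasure μ]
    (J : ℕ)
    (Yp : Fin J → Ω → ℝ) (hYm : ∀ j, Measurable (Yp j))
    (Dz Dz' : Ω → Fin J)
    (Z : Ω → Bool)
    (hz : 0 < μ {ω | Z ω = false}) (hz' : 0 < μ {ω | Z ω = true})
    (hindep : IndepFun Z (fun ω => ((fun j => Yp j ω), Dz ω, Dz' ω)) μ)
    (D : Ω → Fin J) (Y : Ω → ℝ)
    (hY : ∀ ω, Y ω = ∑ j : Fin J, Yp j ω * (if D ω = j then 1 else 0))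
    (N : Fin J → ℕ) (A : (j : Fin J) → Fin (N j) → Set ℝ)
    (hAm : ∀ j i, MeasurableSet (A j i))
    (hAcover : ∀ j, (⋃ i, A j i) = Set.univ)
    (hAdisj : ∀ j, ∀ i i' : Fin (N j), i ≠ i' → Disjoint (A j i) (A j i')) :
    1 ≤ ∑ f : (j : Fin J) → Fin (N j),
        min
          (∑ j : Fin J, (μ {ω | Y ω ∈ A j (f j) ∧ D ω = j ∧ Z ω = false}).toReal
            / (μ {ω | Z ω = false}).toReal)
          (∑ j : Fin J, (μ {ω | Y ω ∈ A j (f j) ∧ D ω = j ∧ Z ω = true}).toReal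
            / (μ {ω | Z ω = true}).toReal) := by
  set X : Ω → Fin J → ℝ := fun ω j => Yp j ω
  have hYX : ∀ ω, Y ω = X ω (D ω) := fun ω => by simp [hY, X]
  have hZX : IndepFun Z X μ := hindep.comp measurable_id measurable_fst
  calc (1 : ℝ) = ∑ f : (j : Fin J) → Fin (N j), μ.real (X ⁻¹' univ.pi fun j => A j (f j)) := by
        rw [sum_measureReal_preimage_univ_pi A μ (measurable_pi_lambda X hYm) hAm hAcover
          fun j i i' => hAdisj j i i', probReal_univ]
    _ ≤ _ := Finset.sum_le_sum fun f _ => le_min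
        (measureReal_preimage_univ_pi_le_sum_div hYX hZX (fun j => hAm j (f j)) hz.ne')
        (measureReal_preimage_univ_pi_le_sum_div hYX hZX (fun j => hAm j (f j)) hz'.ne')

/-- Second Kédagni–Mourifié-type testable inequality: for any finite Borel
partitions `A j` of ℝ (one per treatment value `j : Fin J`), the sum over all
cells of the product partition of the minimum (over the two instrument values)
of the total conditional subdistribution mass is at least one. -/
theorem km_partition_lower_bound
    {Ω : Type*} [MeasurableSpace Ω] (μ : Measure Ω) [IsProbabilityMeasure μ]
    (J : ℕ) (hJ : 1 ≤ J)
    (Yp : Fin J → Ω → ℝ) (hYm : ∀ j, Measurable (Yp j))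
    (Dz Dz' : Ω → Fin J) (hDzm : Measurable Dz) (hDz'm : Measurable Dz')
    (Z : Ω → Bool) (hZm : Measurable Z)
    (hz : 0 < μ {ω | Z ω = false}) (hz' : 0 < μ {ω | Z ω = true})
    (hindep : IndepFun Z (fun ω => ((fun j => Yp j ω), Dz ω, Dz' ω)) μ)
    (D : Ω → Fin J) (Y : Ω → ℝ)
    (hD : ∀ ω, D ω = if Z ω = true then Dz' ω else Dz ω)
    (hY : ∀ ω, Y ω = ∑ j : Fin J, Yp j ω * (if D ω = j then 1 else 0))
    (N : Fin J → ℕ) (A : (j : Fin J) → Fin (N j) → Set ℝ)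
    (hAm : ∀ j i, MeasurableSet (A j i))
    (hAcover : ∀ j, (⋃ i, A j i) = Set.univ)
    (hAdisj : ∀ j, ∀ i i' : Fin (N j), i ≠ i' → Disjoint (A j i) (A j i')) :
    1 ≤ ∑ f : (j : Fin J) → Fin (N j),
        min
          (∑ j : Fin J, (μ {ω | Y ω ∈ A j (f j) ∧ D ω = j ∧ Z ω = false}).toReal
            / (μ {ω | Z ω = false}).toReal)
          (∑ j : Fin J, (μ {ω | Y ω ∈ A j (f j) ∧ D ω = j ∧ Z ω = true}).toReal
            / (μ {ω | Z ω = true}).toReal) :=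
  km_partition_lower_bound_general μ J Yp hYm Dz Dz' Z hz hz' hindep D Y hY N A hAm hAcover hAdisj
end

section
/- Under the same setup, for any finite partition P of ℝ into Borel sets and any d ∈ 𝒟: Σ_{A ∈ P} max_{w ∈ {z, z'}} ℙ(Y ∈ A, D = d | Z = w) ≤ 1. -/
/-!
The observed event `{Y ∈ A, D = d, Z = w}` is the event `{Z = w}` intersected with an event
about the potential outcomes and treatments alone, namely `{Y_d ∈ A, D_w = d}`. By independence of
the instrument its conditional probability given `Z = w` is the probability of the latter event,
hence at most `ℙ(Y_d ∈ A)`. Taking the larger of the two instrument values cell by cell therefore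
stays below the distribution of `Y_d`, whose masses on the disjoint cells sum to at most one.
-/

open MeasureTheory ProbabilityTheory

section

variable {Ω : Type*} [MeasurableSpace Ω] {μ : Measure Ω}

/-- When `Z ⁻¹' s` is null the left-hand side is `0` by the convention `x / 0 = 0`. -/
theorem ProbabilityTheory.IndepFun.measureReal_inter_preimage_div_le {β γ : Type*}
    [MeasurableSpace β] [MeasurableSpace γ] {Z : Ω → γ} {X : Ω → β} (h : IndepFun Z X μ)
    {s : Set γ} {t : Set β} (hs : MeasurableSet s) (ht : MeasurableSet t) :
    μ.real (Z ⁻¹' s ∩ X ⁻¹' t) / μ.real (Z ⁻¹' s) ≤ μ.real (X ⁻¹' t) := by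
  refine div_le_of_le_mul₀ measureReal_nonneg measureReal_nonneg (le_of_eq ?_)
  rw [measureReal_def, h.measure_inter_preimage_eq_mul s t hs ht, ENNReal.toReal_mul, mul_comm]
  rfl

theorem measureReal_outcome_treatment_instrument_div_le [IsFiniteMeasure μ]
    {𝒟 : Type*} [MeasurableSpace 𝒟] [MeasurableSingletonClass 𝒟]
    {Yp : 𝒟 → Ω → ℝ} {Dz Dz' : Ω → 𝒟} {Z : Ω → Bool}
    (hindep : IndepFun Z (fun ω => ((fun d => Yp d ω), Dz ω, Dz' ω)) μ)
    {D : Ω → 𝒟} {Y : Ω → ℝ} (hD : ∀ ω, D ω = if Z ω = true then Dz' ω else Dz ω)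
    (hY : ∀ ω, Y ω = Yp (D ω) ω) {A : Set ℝ} (hA : MeasurableSet A) (d : 𝒟) (w : Bool) :
    μ.real {ω | Y ω ∈ A ∧ D ω = d ∧ Z ω = w} / μ.real {ω | Z ω = w} ≤ μ.real (Yp d ⁻¹' A) := by
  set T : Set ((𝒟 → ℝ) × 𝒟 × 𝒟) := {p | p.1 d ∈ A ∧ (if w = true then p.2.2 else p.2.1) = d}
  have hT : MeasurableSet T := by
    refine ((measurable_pi_apply d).comp measurable_fst hA).inter ?_
    cases w
    · exact (measurable_fst.comp measurable_snd) (measurableSet_singleton d)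
    · exact (measurable_snd.comp measurable_snd) (measurableSet_singleton d)
  have hevent : {ω | Y ω ∈ A ∧ D ω = d ∧ Z ω = w}
      = Z ⁻¹' {w} ∩ (fun ω => ((fun d => Yp d ω), Dz ω, Dz' ω)) ⁻¹' T := by
    ext ω
    simp only [Set.mem_ofPred_eq, Set.mem_inter_iff, Set.mem_preimage, Set.mem_singleton_iff, T,
      hY, hD]
    constructor
    · rintro ⟨hA, rfl, rfl⟩
      exact ⟨rfl, hA, rfl⟩
    · rintro ⟨rfl, hA, rfl⟩
      exact ⟨hA, rfl, rfl⟩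
  calc μ.real {ω | Y ω ∈ A ∧ D ω = d ∧ Z ω = w} / μ.real {ω | Z ω = w}
      ≤ μ.real ((fun ω => ((fun d => Yp d ω), Dz ω, Dz' ω)) ⁻¹' T) := by
        rw [hevent]
        exact hindep.measureReal_inter_preimage_div_le (measurableSet_singleton w) hT
    _ ≤ μ.real (Yp d ⁻¹' A) := measureReal_mono fun _ hω => hω.1

end

theorem km_partition_upper_bound_general
    {Ω : Type*} [MeasurableSpace Ω] (μ : Measure Ω) [IsProbabilityMeasure μ]
    {𝒟 : Type*} [Fintype 𝒟] [DecidableEq 𝒟] [MeasurableSpace 𝒟]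
    [MeasurableSingletonClass 𝒟]
    (Yp : 𝒟 → Ω → ℝ) (hYm : ∀ d, Measurable (Yp d))
    (Dz Dz' : Ω → 𝒟)
    (Z : Ω → Bool)
    (hindep : IndepFun Z (fun ω => ((fun d => Yp d ω), Dz ω, Dz' ω)) μ)
    (D : Ω → 𝒟) (Y : Ω → ℝ)
    (hD : ∀ ω, D ω = if Z ω = true then Dz' ω else Dz ω)
    (hY : ∀ ω, Y ω = ∑ d : 𝒟, Yp d ω * (if D ω = d then 1 else 0))
    (N : ℕ) (A : Fin N → Set ℝ)
    (hAm : ∀ i, MeasurableSet (A i))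
    (hAdisj : ∀ i i' : Fin N, i ≠ i' → Disjoint (A i) (A i'))
    (d : 𝒟) :
    ∑ i : Fin N,
        max
          ((μ {ω | Y ω ∈ A i ∧ D ω = d ∧ Z ω = false}).toReal
            / (μ {ω | Z ω = false}).toReal)
          ((μ {ω | Y ω ∈ A i ∧ D ω = d ∧ Z ω = true}).toReal
            / (μ {ω | Z ω = true}).toReal)
      ≤ 1 := by
  have hY' : ∀ ω, Y ω = Yp (D ω) ω := fun ω => by simp [hY]
  have hcell := fun i => measureReal_outcome_treatment_instrument_div_le hindep hD hY' (hAm i) d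
  calc _ ≤ ∑ i, μ.real (Yp d ⁻¹' A i) :=
        Finset.sum_le_sum fun i _ => max_le (hcell i false) (hcell i true)
    _ ≤ μ.real Set.univ := sum_measureReal_le_measureReal_univ (fun i _ => hYm d (hAm i))
        fun i _ j _ hij => (hAdisj i j hij).preimage _
    _ = 1 := probReal_univ

/-- First Kédagni–Mourifié-type testable inequality (discrete-partition form):
for any finite Borel partition of ℝ and any treatment value `d`, the sum over
cells of the maximum (over the two instrument values) of the conditional
subdistribution mass is at most one. -/
theorem km_partition_upper_bound
    {Ω : Type*} [MeasurableSpace Ω] (μ : Measure Ω) [IsProbabilityMeasure μ]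
    {𝒟 : Type*} [Fintype 𝒟] [DecidableEq 𝒟] [MeasurableSpace 𝒟]
    [MeasurableSingletonClass 𝒟]
    (Yp : 𝒟 → Ω → ℝ) (hYm : ∀ d, Measurable (Yp d))
    (Dz Dz' : Ω → 𝒟) (hDzm : Measurable Dz) (hDz'm : Measurable Dz')
    (Z : Ω → Bool) (hZm : Measurable Z)
    (hz : 0 < μ {ω | Z ω = false}) (hz' : 0 < μ {ω | Z ω = true})
    (hindep : IndepFun Z (fun ω => ((fun d => Yp d ω), Dz ω, Dz' ω)) μ)
    (D : Ω → 𝒟) (Y : Ω → ℝ)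
    (hD : ∀ ω, D ω = if Z ω = true then Dz' ω else Dz ω)
    (hY : ∀ ω, Y ω = ∑ d : 𝒟, Yp d ω * (if D ω = d then 1 else 0))
    (N : ℕ) (A : Fin N → Set ℝ)
    (hAm : ∀ i, MeasurableSet (A i))
    (hAcover : (⋃ i, A i) = Set.univ)
    (hAdisj : ∀ i i' : Fin N, i ≠ i' → Disjoint (A i) (A i'))
    (d : 𝒟) :
    ∑ i : Fin N,
        max
          ((μ {ω | Y ω ∈ A i ∧ D ω = d ∧ Z ω = false}).toReal
            / (μ {ω | Z ω = false}).toReal)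
          ((μ {ω | Y ω ∈ A i ∧ D ω = d ∧ Z ω = true}).toReal
            / (μ {ω | Z ω = true}).toReal)
      ≤ 1 :=
  km_partition_upper_bound_general μ Yp hYm Dz Dz' Z hindep D Y hD hY N A hAm hAdisj d
end

section
/- Let G be a finite set, s : G → ℝ a function, and for each n let ŝ_n : G → ℝ be random variables such that for every g ∈ G, the sequence √n·(ŝ_n(g) − s(g)) is bounded in probability (tight). Let (τ_n) be a sequence of positive reals with τ_n → ∞ and τ_n/√n → 0. Define G₀ = {g ∈ G : s(g) = 0} and Ĝ_n = {g ∈ G : √n·|ŝ_n(g)| ≤ τ_n}. Then ℙ(Ĝ_n = G₀) → 1 as n → ∞. -/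
open MeasureTheory Filter Topology

/-!
Consistency of thresholding. For `g ∈ G₀` a wrong decision means `√n |ŝ_n(g) - s(g)| > τ_n`,
and for `g ∉ G₀` it forces `√n |ŝ_n(g) - s(g)| ≥ √n |s(g)| - τ_n`; both thresholds tend to
infinity (the second because `τ_n = o(√n)`), so tightness makes each misclassification
probability vanish, and a union bound over the finite set `G` finishes the proof.
-/

section Tightness

variable {Ω ι : Type*} [MeasurableSpace Ω]

def BoundedInProbability (μ : Measure Ω) (X : ι → Ω → ℝ) : Prop :=
  ∀ ε : ℝ, 0 < ε → ∃ M : ℝ, ∀ i, (μ {ω | M < X i ω}).toReal ≤ ε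

theorem BoundedInProbability.tendsto_measure_le {μ : Measure Ω} [IsFiniteMeasure μ]
    {X : ι → Ω → ℝ} (hX : BoundedInProbability μ X) {l : Filter ι} {c : ι → ℝ}
    (hc : Tendsto c l atTop) :
    Tendsto (fun i => μ {ω | c i ≤ X i ω}) l (𝓝 0) := by
  rw [ENNReal.tendsto_nhds_zero]
  intro ε hε
  rcases eq_or_ne ε ⊤ with rfl | hε_top
  · exact Eventually.of_forall fun _ => le_top
  obtain ⟨M, hM⟩ := hX ε.toReal (ENNReal.toReal_pos hε.ne' hε_top)
  filter_upwards [hc.eventually_gt_atTop M] with i hi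
  calc μ {ω | c i ≤ X i ω} ≤ μ {ω | M < X i ω} :=
        measure_mono fun ω hω => hi.trans_le hω
    _ ≤ ε := (ENNReal.toReal_le_toReal (measure_ne_top _ _) hε_top).mp (hM i)

end Tightness

theorem tendsto_mul_sub_atTop_of_div_tendsto_zero {ι : Type*} {l : Filter ι} {f τ : ι → ℝ}
    (hf : Tendsto f l atTop) (hτf : Tendsto (fun i => τ i / f i) l (𝓝 0)) {a : ℝ} (ha : 0 < a) :
    Tendsto (fun i => f i * a - τ i) l atTop := by
  have hfactor : (fun i => f i * (a - τ i / f i)) =ᶠ[l] fun i => f i * a - τ i := by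
    filter_upwards [hf.eventually_ne_atTop 0] with i hi
    rw [mul_sub, mul_div_cancel₀ _ hi]
  refine (hf.atTop_mul_pos ha ?_).congr' hfactor
  simpa using (tendsto_const_nhds (x := a)).sub hτf

theorem tendsto_sqrt_natCast_atTop : Tendsto (fun n : ℕ => Real.sqrt n) atTop atTop :=
  Real.tendsto_sqrt_atTop.comp tendsto_natCast_atTop_atTop

section Measure

variable {Ω ι α : Type*} [MeasurableSpace Ω]

theorem tendsto_measure_iUnion_fintype_zero [Fintype ι] {μ : Measure Ω} {l : Filter α}
    {s : α → ι → Set Ω} (hs : ∀ i, Tendsto (fun a => μ (s a i)) l (𝓝 0)) :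
    Tendsto (fun a => μ (⋃ i, s a i)) l (𝓝 0) := by
  have hsum : Tendsto (fun a => ∑ i, μ (s a i)) l (𝓝 0) := by
    simpa using tendsto_finsetSum Finset.univ fun i _ => hs i
  exact tendsto_of_tendsto_of_tendsto_of_le_of_le tendsto_const_nhds hsum
    (fun _ => bot_le) fun a => measure_iUnion_fintype_le μ (s a)

theorem tendsto_measure_one_of_compl {μ : Measure Ω} [IsProbabilityMeasure μ] {l : Filter α}
    {s : α → Set Ω} (hs : Tendsto (fun a => μ (s a)ᶜ) l (𝓝 0)) :
    Tendsto (fun a => μ (s a)) l (𝓝 1) := by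
  have hlower : Tendsto (fun a => 1 - μ (s a)ᶜ) l (𝓝 1) := by
    simpa using ENNReal.Tendsto.sub tendsto_const_nhds hs (Or.inr ENNReal.zero_ne_top)
  refine tendsto_of_tendsto_of_tendsto_of_le_of_le hlower tendsto_const_nhds (fun a => ?_)
    fun _ => prob_le_one
  rw [tsub_le_iff_right]
  calc (1 : ENNReal) = μ (s a ∪ (s a)ᶜ) := by rw [Set.union_compl_self, measure_univ]
    _ ≤ μ (s a) + μ (s a)ᶜ := measure_union_le _ _

end Measure

theorem tendsto_measure_threshold_misclassified {Ω : Type*} [MeasurableSpace Ω]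
    {μ : Measure Ω} [IsFiniteMeasure μ] {s : ℝ} {shat : ℕ → Ω → ℝ}
    (htight : BoundedInProbability μ fun (n : ℕ) ω => Real.sqrt n * |shat n ω - s|)
    {τ : ℕ → ℝ} (hτ : Tendsto τ atTop atTop)
    (hτn : Tendsto (fun n : ℕ => τ n / Real.sqrt n) atTop (𝓝 0)) :
    Tendsto (fun n : ℕ => μ {ω | ¬(Real.sqrt n * |shat n ω| ≤ τ n ↔ s = 0)}) atTop (𝓝 0) := by
  by_cases hs : s = 0
  · subst hs
    refine tendsto_of_tendsto_of_tendsto_of_le_of_le tendsto_const_nhds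
      (htight.tendsto_measure_le hτ) (fun _ => bot_le) fun n => measure_mono fun ω hω => ?_
    simp only [iff_true, not_le, sub_zero, Set.mem_ofPred_eq] at hω ⊢
    exact hω.le
  · have hc := tendsto_mul_sub_atTop_of_div_tendsto_zero tendsto_sqrt_natCast_atTop hτn
      (abs_pos.mpr hs)
    refine tendsto_of_tendsto_of_tendsto_of_le_of_le tendsto_const_nhds
      (htight.tendsto_measure_le hc) (fun _ => bot_le) fun n => measure_mono fun ω hω => ?_
    simp only [hs, iff_false, not_not, Set.mem_ofPred_eq] at hω ⊢
    have hreverse : |s| - |shat n ω| ≤ |shat n ω - s| := by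
      simpa [abs_sub_comm] using abs_sub_abs_le_abs_sub s (shat n ω)
    nlinarith [Real.sqrt_nonneg n]

theorem estimated_validity_set_consistency_general
    {Ω : Type*} [MeasurableSpace Ω] (μ : Measure Ω) [IsProbabilityMeasure μ]
    {G : Type*} [Fintype G]
    (s : G → ℝ) (shat : ℕ → G → Ω → ℝ)
    (htight : ∀ g : G, ∀ ε : ℝ, 0 < ε → ∃ M : ℝ,
      ∀ n : ℕ, (μ {ω | M < Real.sqrt n * |shat n g ω - s g|}).toReal ≤ ε)
    (τ : ℕ → ℝ)
    (hτ : Tendsto τ atTop atTop)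
    (hτn : Tendsto (fun n => τ n / Real.sqrt n) atTop (nhds 0)) :
    Tendsto
      (fun n : ℕ =>
        μ {ω | {g : G | Real.sqrt n * |shat n g ω| ≤ τ n} = {g : G | s g = 0}})
      atTop (nhds (1 : ENNReal)) := by
  refine tendsto_measure_one_of_compl ?_
  have hcompl : ∀ n : ℕ,
      {ω | {g : G | Real.sqrt n * |shat n g ω| ≤ τ n} = {g : G | s g = 0}}ᶜ =
        ⋃ g, {ω | ¬(Real.sqrt n * |shat n g ω| ≤ τ n ↔ s g = 0)} := by
    intro n
    ext ω
    simp [Set.ext_iff]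
  simp_rw [hcompl]
  exact tendsto_measure_iUnion_fintype_zero fun g =>
    tendsto_measure_threshold_misclassified (htight g) hτ hτn

/-- Consistency of the thresholding set estimator: if for each `g` the
studentized statistics `√n (ŝ_n(g) − s(g))` are bounded in probability, and
`τ_n → ∞` with `τ_n/√n → 0`, then the estimated set
`Ĝ_n = {g : √n |ŝ_n(g)| ≤ τ_n}` equals `G₀ = {g : s(g) = 0}` with probability
tending to one. -/
theorem estimated_validity_set_consistency
    {Ω : Type*} [MeasurableSpace Ω] (μ : Measure Ω) [IsProbabilityMeasure μ]
    {G : Type*} [Fintype G]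
    (s : G → ℝ) (shat : ℕ → G → Ω → ℝ)
    (htight : ∀ g : G, ∀ ε : ℝ, 0 < ε → ∃ M : ℝ,
      ∀ n : ℕ, (μ {ω | M < Real.sqrt n * |shat n g ω - s g|}).toReal ≤ ε)
    (τ : ℕ → ℝ) (hτpos : ∀ n, 0 < τ n)
    (hτ : Tendsto τ atTop atTop)
    (hτn : Tendsto (fun n => τ n / Real.sqrt n) atTop (nhds 0)) :
    Tendsto
      (fun n : ℕ =>
        μ {ω | {g : G | Real.sqrt n * |shat n g ω| ≤ τ n} = {g : G | s g = 0}})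
      atTop (nhds (1 : ENNReal)) :=
  estimated_validity_set_consistency_general μ s shat htight τ hτ hτn
end
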